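/- Let $L$ be a cyclic quadratic lattice of rank $n+1$ and order $l \ge 1$ over $\mathcal{O}_F$ ($F$ a $p$-adic field, $p$ odd). If $L^\sharp$ and $L^{\sharp\prime}$ are two self-dual quadratic lattices of rank $n+2$ each admitting a primitive isometric embedding of $L$, then $L^\sharp$ and $L^{\sharp\prime}$ are isometric. (Uniqueness of the self-dual overlattice of corank one.) -/

import Mathlib

/-!
Write a lattice `M ⊇ L` of corank one with `L` primitive as `L ⊕ O x`; it is then determined by
the functional `φ = ⟪x, -⟫` on `L` and the norm `c = Q x`. Self-duality of `M` forces `φ` to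
generate `L^∨/L ≅ O/ϖ^l`, so two such gluing functionals differ by a unit multiple plus an element
of `L`, which is absorbed by the change of generator `x ↦ u x + ν`. What remains is a change of
`c`; since `ϖ^l φ = ⟪z, -⟫` for some `z` and `ϖ^l c - φ z` is a unit, the generators
`x ↦ (1 + ϖ^l δ) x - δ z` change `c` by `(2δ + ϖ^l δ²)(ϖ^l c - φ z)`, and Hensel's lemma makes
this any prescribed value.
-/

open IsLocalRing Module

open Polynomial in
theorem exists_one_add_mul_sq_eq_one_add {R : Type*} [CommRing R] [IsLocalRing R]
    [HenselianRing R (maximalIdeal R)] [Invertible (2 : R)] {a : R} (ha : a ∈ maximalIdeal R) :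
    ∃ d : R, (1 + a * d) ^ 2 = 1 + a := by
  have h2 : IsUnit (2 : R) := isUnit_of_invertible 2
  obtain ⟨r, hroot, hr⟩ := HenselianRing.is_henselian (I := maximalIdeal R) (X ^ 2 - C (1 + a))
    (monic_X_pow_sub_C _ two_ne_zero) 1 (by simpa using ha)
    (by simpa [one_add_one_eq_two] using h2.map (Ideal.Quotient.mk (maximalIdeal R)))
  have hsq : r ^ 2 = 1 + a := by simpa [sub_eq_zero] using hroot
  -- `r + 1 = 2 + (r - 1)` with `r - 1` in the maximal ideal
  have hunit : IsUnit (r + 1) := by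
    by_contra h
    have h2mem : (2 : R) ∈ maximalIdeal R := by
      simpa [one_add_one_eq_two] using sub_mem ((mem_maximalIdeal _).mpr h) hr
    exact (mem_maximalIdeal _).mp h2mem h2
  refine ⟨↑hunit.unit⁻¹, ?_⟩
  have : a * ↑hunit.unit⁻¹ = r - 1 := by
    rw [Units.mul_inv_eq_iff_eq_mul, IsUnit.unit_spec]
    linear_combination -hsq
  rw [this, add_sub_cancel, hsq]

theorem IsLocalRing.isUnit_of_dvd_one_sub {R : Type*} [CommRing R] [IsLocalRing R] {a x : R}
    (ha : a ∈ maximalIdeal R) (hdvd : a ∣ 1 - x) : IsUnit x :=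
  isUnit_of_mem_nonunits_one_sub_self x (Ideal.mem_of_dvd _ hdvd ha)

namespace Submodule

variable {R N : Type*} [CommRing R] [AddCommGroup N] [Module R N] {P : Submodule R N}
  {I : Ideal R}

theorem smul_mem_of_quotient_linearEquiv (e : (N ⧸ P) ≃ₗ[R] (R ⧸ I)) {r : R} (hr : r ∈ I)
    (n : N) : r • n ∈ P := by
  rw [← I.annihilator_quotient, ← e.annihilator_eq, Module.mem_annihilator] at hr
  simpa [← Quotient.mk_smul, Quotient.mk_eq_zero] using hr (Quotient.mk n)

theorem mem_of_smul_mem_of_quotient_linearEquiv (e : (N ⧸ P) ≃ₗ[R] (R ⧸ I)) {n₀ : N}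
    (hgen : ∀ n : N, ∃ t : R, n - t • n₀ ∈ P) {r : R} (hr : r • n₀ ∈ P) : r ∈ I := by
  rw [← I.annihilator_quotient, ← e.annihilator_eq, Module.mem_annihilator]
  refine Quotient.mk_surjective _ |>.forall.mpr fun n => ?_
  obtain ⟨t, ht⟩ := hgen n
  have : r • n = r • (n - t • n₀) + t • r • n₀ := by
    rw [smul_sub, smul_comm r t, sub_add_cancel]
  rw [← Quotient.mk_smul, Quotient.mk_eq_zero, this]
  exact P.add_mem (P.smul_mem r ht) (P.smul_mem t hr)

end Submodule

theorem LinearMap.exists_bijective_coprod_toSpanSingleton {R L M : Type*} [CommRing R]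
    [IsDomain R] [IsPrincipalIdealRing R] [AddCommGroup L] [Module R L] [AddCommGroup M]
    [Module R M] [Module.Free R M] [Module.Finite R M] (ι : L →ₗ[R] M)
    (hprim : ∃ π : M →ₗ[R] L, π ∘ₗ ι = LinearMap.id) (hrk : finrank R M = finrank R L + 1) :
    ∃ x : M, Function.Bijective (ι.coprod (LinearMap.toSpanSingleton R M x)) := by
  obtain ⟨π, hπ⟩ := hprim
  have hπι : ∀ y, π (ι y) = y := LinearMap.congr_fun hπ
  have hinj : Function.Injective ι := Function.LeftInverse.injective hπι
  have hcompl : IsCompl (range ι) (ker π) := by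
    have := LinearMap.isCompl_of_proj (f := ι.rangeRestrict ∘ₗ π)
      (fun ⟨_, y, hy⟩ => by ext; simp [← hy, hπι])
    rwa [LinearMap.ker_comp_of_ker_eq_bot _
      (by rw [LinearMap.ker_rangeRestrict, ker_eq_bot.mpr hinj])] at this
  have hK : finrank R (ker π) = 1 := by
    have := (Submodule.prodEquivOfIsCompl _ _ hcompl).finrank_eq
    rw [finrank_prod, LinearMap.finrank_range_of_inj hinj] at this
    omega
  obtain ⟨eK⟩ := nonempty_linearEquiv_of_finrank_eq_one hK
  refine ⟨eK 1, ?_⟩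
  convert (((LinearEquiv.ofInjective ι hinj).prodCongr eK).trans
    (Submodule.prodEquivOfIsCompl _ _ hcompl)).bijective
  ext ⟨y, t⟩
  simp [← Submodule.coe_smul, ← map_smul]

namespace QuadraticMap

variable {R L M : Type*} [CommRing R] [AddCommGroup L] [Module R L] [AddCommGroup M] [Module R M]

/-- The form on `L ⊕ R x` restricting to `Q` on `L`, with `⟪x, y⟫ = φ y` and `Q x = c`. -/
def extendByLine (Q : QuadraticForm R L) (φ : Module.Dual R L) (c : R) :
    QuadraticForm R (L × R) :=
  Q.prod (c • sq) + 2 • linMulLin (LinearMap.snd R L R) (φ ∘ₗ LinearMap.fst R L R)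

@[simp]
theorem extendByLine_apply (Q : QuadraticForm R L) (φ : Module.Dual R L) (c : R) (y : L)
    (t : R) : Q.extendByLine φ c (y, t) = Q y + 2 * t * φ y + t ^ 2 * c := by
  simp [extendByLine, sq_apply]
  ring

variable [Invertible (2 : R)]

theorem two_mul_associated_apply (Q : QuadraticForm R L) (x y : L) :
    2 * associated Q x y = Q (x + y) - Q x - Q y := by
  have h := LinearMap.congr_fun₂ (two_nsmul_associated R Q) x y
  simpa only [LinearMap.smul_apply, two_nsmul, two_mul, LinearMap.add_apply,
    polarBilin_apply_apply, polar] using h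

theorem apply_add_smul (Q : QuadraticForm R L) (y ν : L) (t : R) :
    Q (y + t • ν) = Q y + 2 * t * associated Q y ν + t ^ 2 * Q ν := by
  have h := two_mul_associated_apply Q y (t • ν)
  rw [map_smul, QuadraticMap.map_smul, smul_eq_mul, smul_eq_mul] at h
  linear_combination -h

theorem associated_extendByLine_apply (Q : QuadraticForm R L) (φ : Module.Dual R L) (c : R)
    (p q : L × R) :
    associated (Q.extendByLine φ c) p q
      = associated Q p.1 q.1 + p.2 * φ q.1 + q.2 * φ p.1 + p.2 * q.2 * c := by
  obtain ⟨y, t⟩ := p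
  obtain ⟨y', t'⟩ := q
  apply (isUnit_of_invertible (2 : R)).mul_left_cancel
  simp only [two_mul_associated_apply, mul_add, Prod.mk_add_mk, extendByLine_apply, map_add]
  ring

theorem comp_coprod_toSpanSingleton (Q : QuadraticForm R M) (ι : L →ₗ[R] M) (x : M) :
    Q.comp (ι.coprod (LinearMap.toSpanSingleton R M x))
      = (Q.comp ι).extendByLine (associated Q x ∘ₗ ι) (Q x) := by
  ext ⟨y, t⟩
  simp [apply_add_smul, associated_isSymm R Q x]

theorem IsometryEquiv.bijective_associated {Q₁ : QuadraticForm R L} {Q₂ : QuadraticForm R M}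
    (i : Q₁.IsometryEquiv Q₂) (h : Function.Bijective (associated Q₂)) :
    Function.Bijective (associated Q₁) := by
  have hQ : Q₂.comp (i : L →ₗ[R] M) = Q₁ := QuadraticMap.ext i.map_app
  have : ⇑(associated Q₁) = (i : L ≃ₗ[R] M).dualMap ∘ associated Q₂ ∘ i := by
    ext x y
    have := LinearMap.congr_fun₂ (associated_comp R Q₂ (i : L →ₗ[R] M)) x y
    rwa [hQ] at this
  rw [this]
  exact (LinearEquiv.bijective _).comp (h.comp i.bijective)

theorem exists_isometryEquiv_extendByLine [IsDomain R] [IsPrincipalIdealRing R]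
    [Module.Free R M] [Module.Finite R M] {QL : QuadraticForm R L} {Q : QuadraticForm R M}
    {ι : L →ₗ[R] M} (hι : ∀ y, Q (ι y) = QL y) (hprim : ∃ π : M →ₗ[R] L, π ∘ₗ ι = LinearMap.id)
    (hrk : finrank R M = finrank R L + 1) :
    ∃ (φ : Module.Dual R L) (c : R), Nonempty ((QL.extendByLine φ c).IsometryEquiv Q) := by
  obtain rfl : Q.comp ι = QL := QuadraticMap.ext hι
  obtain ⟨x, hx⟩ := ι.exists_bijective_coprod_toSpanSingleton hprim hrk
  exact ⟨_, _, ⟨⟨LinearEquiv.ofBijective _ hx,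
    DFunLike.congr_fun (comp_coprod_toSpanSingleton Q ι x)⟩⟩⟩

/-- The change of generator `(0, 1) ↦ (ν, u)` of the line. -/
theorem nonempty_isometryEquiv_extendByLine_smul_add (Q : QuadraticForm R L)
    (φ : Module.Dual R L) (c : R) (u : Rˣ) (ν : L) :
    Nonempty ((Q.extendByLine (u • φ + associated Q ν)
      (u * u * c + 2 * u * φ ν + Q ν)).IsometryEquiv (Q.extendByLine φ c)) := by
  let g : (L × R) ≃ₗ[R] (L × R) :=
    { toFun := fun p => (p.1 + p.2 • ν, u * p.2)
      invFun := fun p => (p.1 - (u⁻¹ * p.2 : R) • ν, u⁻¹ * p.2)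
      map_add' := fun p q => by
        ext <;> simp only [Prod.fst_add, Prod.snd_add, add_smul, mul_add]; abel
      map_smul' := fun r p => by ext <;> simp [smul_smul, mul_left_comm]
      left_inv := fun p => by ext <;> simp
      right_inv := fun p => by ext <;> simp }
  refine ⟨⟨g, fun ⟨y, t⟩ => ?_⟩⟩
  show Q.extendByLine φ c (y + t • ν, u * t) = _
  simp only [extendByLine_apply, apply_add_smul, map_add, map_smul, smul_eq_mul,
    LinearMap.add_apply, LinearMap.smul_apply, Units.smul_def, associated_isSymm R Q ν y]
  ring

section SelfDual

variable {Q : QuadraticForm R L} {φ : Module.Dual R L} {c : R}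
  (hsd : Function.Bijective (associated (Q.extendByLine φ c)))
include hsd

theorem exists_eq_smul_add_associated_of_bijective (μ : Module.Dual R L) :
    ∃ (t : R) (y : L), μ = t • φ + associated Q y := by
  obtain ⟨p, hp⟩ := hsd.2 (μ ∘ₗ LinearMap.fst R L R)
  refine ⟨p.2, p.1, LinearMap.ext fun y => ?_⟩
  have := LinearMap.congr_fun hp (y, 0)
  simp only [associated_extendByLine_apply, LinearMap.comp_apply, LinearMap.fst_apply] at this
  simp only [LinearMap.add_apply, LinearMap.smul_apply, smul_eq_mul]
  linear_combination -this

theorem dvd_of_smul_mem_range_of_bijective {a : R}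
    (e : (Module.Dual R L ⧸ LinearMap.range (associated Q)) ≃ₗ[R] (R ⧸ Ideal.span {a}))
    {r : R} (hr : r • φ ∈ LinearMap.range (associated Q)) : a ∣ r := by
  refine Ideal.mem_span_singleton.mp (Submodule.mem_of_smul_mem_of_quotient_linearEquiv e
    (fun μ => ?_) hr)
  obtain ⟨t, y, rfl⟩ := exists_eq_smul_add_associated_of_bijective hsd μ
  exact ⟨t, ⟨y, by rw [add_sub_cancel_left]⟩⟩

theorem isUnit_sub_of_bijective [IsDomain R] {a : R} (ha : a ≠ 0)
    (hann : ∀ r : R, r • φ ∈ LinearMap.range (associated Q) → a ∣ r)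
    {z : L} (hz : associated Q z = a • φ) : IsUnit (a * c - φ z) := by
  -- the vector of `L ⊕ R x` dual to the coordinate of `x`
  obtain ⟨⟨y, t⟩, hp⟩ := hsd.2 (LinearMap.snd R L R)
  have hL : associated Q y = -(t • φ) := by
    ext y'
    have := LinearMap.congr_fun hp (y', 0)
    simp only [associated_extendByLine_apply, LinearMap.snd_apply] at this
    simp only [LinearMap.neg_apply, LinearMap.smul_apply, smul_eq_mul]
    linear_combination this
  have hx : φ y + t * c = 1 := by
    simpa [associated_extendByLine_apply] using LinearMap.congr_fun hp (0, 1)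
  obtain ⟨r, rfl⟩ := hann t ⟨-y, by rw [map_neg, hL, neg_neg]⟩
  have hφy : φ y = -r * φ z := by
    apply mul_left_cancel₀ ha
    have h1 := LinearMap.congr_fun hz y
    have h2 := LinearMap.congr_fun hL z
    simp only [LinearMap.smul_apply, LinearMap.neg_apply, smul_eq_mul] at h1 h2
    rw [associated_isSymm R Q z y] at h1
    linear_combination h2 - h1
  exact IsUnit.of_mul_eq_one r (by linear_combination hx - hφy)

end SelfDual

section Henselian

variable [IsDomain R] [IsLocalRing R] [HenselianRing R (maximalIdeal R)]
  {Q : QuadraticForm R L} {a : R}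

theorem nonempty_isometryEquiv_extendByLine_add (ha : a ∈ maximalIdeal R) (ha0 : a ≠ 0)
    {φ : Module.Dual R L} {c : R} {z : L} (hz : associated Q z = a • φ)
    (ht : IsUnit (a * c - φ z)) (s : R) :
    Nonempty ((Q.extendByLine φ (c + s)).IsometryEquiv (Q.extendByLine φ c)) := by
  obtain ⟨d, hd⟩ := exists_one_add_mul_sq_eq_one_add
    (Ideal.mul_mem_right (s * ↑ht.unit⁻¹) _ ha)
  set δ := s * ↑ht.unit⁻¹ * d
  have hu : IsUnit (1 + a * δ) := by
    simpa [sub_eq_add_neg] using IsLocalRing.isUnit_one_sub_self_of_mem_nonunits _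
      (Ideal.mul_mem_right (-δ) _ ha)
  have hφ : hu.unit • φ + associated Q (-δ • z) = φ := by
    rw [map_smul, hz, smul_smul, Units.smul_def, IsUnit.unit_spec]
    module
  have hQz : Q z = a * φ z := by
    rw [← associated_eq_self_apply R Q z, hz, LinearMap.smul_apply, smul_eq_mul]
  have htt : ↑ht.unit⁻¹ * (a * c - φ z) = 1 := ht.val_inv_mul
  have hc : ↑hu.unit * ↑hu.unit * c + 2 * ↑hu.unit * φ (-δ • z) + Q (-δ • z) = c + s := by
    apply mul_left_cancel₀ ha0
    simp only [IsUnit.unit_spec, map_smul, QuadraticMap.map_smul, smul_eq_mul, hQz]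
    linear_combination (a * c - φ z) * hd + a * s * htt
  have := nonempty_isometryEquiv_extendByLine_smul_add Q φ c hu.unit (-δ • z)
  rwa [hφ, hc] at this

theorem nonempty_isometryEquiv_extendByLine_of_bijective
    (e : (Module.Dual R L ⧸ LinearMap.range (associated Q)) ≃ₗ[R] (R ⧸ Ideal.span {a}))
    (ha : a ∈ maximalIdeal R) (ha0 : a ≠ 0) {φ₁ φ₂ : Module.Dual R L} {c₁ c₂ : R}
    (hsd₁ : Function.Bijective (associated (Q.extendByLine φ₁ c₁)))
    (hsd₂ : Function.Bijective (associated (Q.extendByLine φ₂ c₂))) :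
    Nonempty ((Q.extendByLine φ₁ c₁).IsometryEquiv (Q.extendByLine φ₂ c₂)) := by
  obtain ⟨w, y₁, hφ₂⟩ := exists_eq_smul_add_associated_of_bijective hsd₁ φ₂
  obtain ⟨w', y₂, hφ₁⟩ := exists_eq_smul_add_associated_of_bijective hsd₂ φ₁
  have hw : IsUnit w := by
    refine isUnit_of_mul_isUnit_left (IsLocalRing.isUnit_of_dvd_one_sub ha
      (dvd_of_smul_mem_range_of_bijective hsd₂ e ⟨w • y₂ + y₁, ?_⟩) : IsUnit (w * w'))
    rw [map_add, map_smul]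
    linear_combination (norm := module) -(w • hφ₁) - hφ₂
  obtain ⟨i₁⟩ := nonempty_isometryEquiv_extendByLine_smul_add Q φ₁ c₁ hw.unit y₁
  rw [Units.smul_def, IsUnit.unit_spec, ← hφ₂] at i₁
  obtain ⟨z, hz⟩ :=
    Submodule.smul_mem_of_quotient_linearEquiv e (Ideal.mem_span_singleton_self a) φ₂
  obtain ⟨i₂⟩ := nonempty_isometryEquiv_extendByLine_add ha ha0 hz
    (isUnit_sub_of_bijective hsd₂ ha0 (fun _ => dvd_of_smul_mem_range_of_bijective hsd₂ e) hz)
    (w * w * c₁ + 2 * w * φ₁ y₁ + Q y₁ - c₂)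
  rw [add_sub_cancel] at i₂
  exact ⟨i₁.symm.trans i₂⟩

end Henselian

end QuadraticMap

namespace Paper2

variable {O : Type*} [CommRing O] [IsDomain O] [IsDiscreteValuationRing O]

theorem statement2_general
    [IsAdicComplete (IsLocalRing.maximalIdeal O) O] [Invertible (2 : O)]
    (ϖ : O) (hϖ : Irreducible ϖ)
    (n l : ℕ) (hl : 1 ≤ l)
    (L L₁ L₂ : Type*)
    [AddCommGroup L] [Module O L]
    [AddCommGroup L₁] [Module O L₁] [Module.Free O L₁] [Module.Finite O L₁]
    [AddCommGroup L₂] [Module O L₂] [Module.Free O L₂] [Module.Finite O L₂]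
    (QL : QuadraticForm O L) (Q₁ : QuadraticForm O L₁) (Q₂ : QuadraticForm O L₂)
    (hrkL : Module.finrank O L = n + 1)
    (hrk₁ : Module.finrank O L₁ = n + 2) (hrk₂ : Module.finrank O L₂ = n + 2)
    -- `L` is nondegenerate and cyclic of order `l` : `L^∨/L ≃ O/ϖ^l`
    (hcyc : Nonempty
      ((Module.Dual O L ⧸ LinearMap.range (QuadraticMap.associated (R := O) QL))
        ≃ₗ[O] (O ⧸ Ideal.span {ϖ ^ l})))
    -- `L₁` and `L₂` are self-dual
    (hsd₁ : Function.Bijective ⇑(QuadraticMap.associated (R := O) Q₁))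
    (hsd₂ : Function.Bijective ⇑(QuadraticMap.associated (R := O) Q₂))
    -- primitive isometric embeddings of `L` into `L₁` and `L₂`
    (ι₁ : L →ₗ[O] L₁) (hι₁ : ∀ x : L, Q₁ (ι₁ x) = QL x)
    (hprim₁ : ∃ π : L₁ →ₗ[O] L, π.comp ι₁ = LinearMap.id)
    (ι₂ : L →ₗ[O] L₂) (hι₂ : ∀ x : L, Q₂ (ι₂ x) = QL x)
    (hprim₂ : ∃ π : L₂ →ₗ[O] L, π.comp ι₂ = LinearMap.id) :
    Nonempty (QuadraticMap.IsometryEquiv Q₁ Q₂) := by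
  obtain ⟨e⟩ := hcyc
  have hϖl : ϖ ^ l ∈ maximalIdeal O :=
    Ideal.pow_mem_of_mem _ ((mem_maximalIdeal _).mpr hϖ.not_isUnit) l (by omega)
  obtain ⟨φ₁, c₁, ⟨i₁⟩⟩ :=
    QuadraticMap.exists_isometryEquiv_extendByLine hι₁ hprim₁ (by rw [hrk₁, hrkL])
  obtain ⟨φ₂, c₂, ⟨i₂⟩⟩ :=
    QuadraticMap.exists_isometryEquiv_extendByLine hι₂ hprim₂ (by rw [hrk₂, hrkL])
  obtain ⟨i⟩ := QuadraticMap.nonempty_isometryEquiv_extendByLine_of_bijective e hϖl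
    (pow_ne_zero l hϖ.ne_zero) (i₁.bijective_associated hsd₁) (i₂.bijective_associated hsd₂)
  exact ⟨i₁.symm.trans (i.trans i₂)⟩

/-- uniqueness (up to isometry) of a self-dual quadratic lattice of rank
`n + 2` admitting a primitive isometric embedding of a fixed cyclic lattice `L` of rank
`n + 1` and order `l ≥ 1`. -/
theorem statement2
    [IsAdicComplete (IsLocalRing.maximalIdeal O) O] [Invertible (2 : O)]
    (ϖ : O) (hϖ : Irreducible ϖ) (hfin : Finite (O ⧸ Ideal.span {ϖ}))
    (n l : ℕ) (hl : 1 ≤ l)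
    (L L₁ L₂ : Type*)
    [AddCommGroup L] [Module O L] [Module.Free O L] [Module.Finite O L]
    [AddCommGroup L₁] [Module O L₁] [Module.Free O L₁] [Module.Finite O L₁]
    [AddCommGroup L₂] [Module O L₂] [Module.Free O L₂] [Module.Finite O L₂]
    (QL : QuadraticForm O L) (Q₁ : QuadraticForm O L₁) (Q₂ : QuadraticForm O L₂)
    (hrkL : Module.finrank O L = n + 1)
    (hrk₁ : Module.finrank O L₁ = n + 2) (hrk₂ : Module.finrank O L₂ = n + 2)
    -- `L` is nondegenerate and cyclic of order `l` : `L^∨/L ≃ O/ϖ^l`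
    (hLnd : Function.Injective ⇑(QuadraticMap.associated (R := O) QL))
    (hcyc : Nonempty
      ((Module.Dual O L ⧸ LinearMap.range (QuadraticMap.associated (R := O) QL))
        ≃ₗ[O] (O ⧸ Ideal.span {ϖ ^ l})))
    -- `L₁` and `L₂` are self-dual
    (hsd₁ : Function.Bijective ⇑(QuadraticMap.associated (R := O) Q₁))
    (hsd₂ : Function.Bijective ⇑(QuadraticMap.associated (R := O) Q₂))
    -- primitive isometric embeddings of `L` into `L₁` and `L₂`
    (ι₁ : L →ₗ[O] L₁) (hι₁ : ∀ x : L, Q₁ (ι₁ x) = QL x)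
    (hprim₁ : ∃ π : L₁ →ₗ[O] L, π.comp ι₁ = LinearMap.id)
    (ι₂ : L →ₗ[O] L₂) (hι₂ : ∀ x : L, Q₂ (ι₂ x) = QL x)
    (hprim₂ : ∃ π : L₂ →ₗ[O] L, π.comp ι₂ = LinearMap.id) :
    Nonempty (QuadraticMap.IsometryEquiv Q₁ Q₂) :=
  statement2_general ϖ hϖ n l hl L L₁ L₂ QL Q₁ Q₂ hrkL hrk₁ hrk₂ hcyc hsd₁ hsd₂ ι₁ hι₁ hprim₁ ι₂ hι₂
    hprim₂

end Paper2
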